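/- Let V be a finite index set and let (μ⁽¹⁾, Σ⁽¹⁾), (μ⁽²⁾, Σ⁽²⁾) be two pairs of mean vectors and symmetric positive definite covariance matrices indexed by V. If D ⊆ V is a seed set for the two pairs and D ⊆ D' ⊆ V, then D' is also a seed set for the two pairs. -/

import Mathlib

/-!
Write `K = Σ⁻¹` and `c = V ∖ D`. The rows `c` of `K Σ = 1` give
`K_{c,D} = -K_{c,c} Σ_{c,D} Σ_D⁻¹` and `K_{c,c} (Σ_c - Σ_{c,D} Σ_D⁻¹ Σ_{D,c}) = 1`, so the
conditional parameters of `X_c` given `X_D` are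
`(K_{c,c}⁻¹ (K μ)_c, -K_{c,c}⁻¹ K_{c,D}, K_{c,c}⁻¹)`. This triple determines, and is
determined by, the rows of `K` and of `K μ` indexed by `c`. Hence `D` is a seed set iff the
two precision matrices and the two vectors `K μ` agree on every row outside `D`, and
that condition passes to every superset of `D`.
-/

open Matrix

def msub {V : Type*} [Fintype V] [DecidableEq V] (M : Matrix V V ℝ) (A B : Finset V) :
    Matrix A B ℝ :=
  M.submatrix (fun a => a.1) (fun b => b.1)

def psub {V : Type*} [Fintype V] [DecidableEq V] (M : Matrix V V ℝ) (A : Finset V) :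
    Matrix A A ℝ :=
  msub M A A

def rest {V : Type*} (x : V → ℝ) (A : Finset V) : A → ℝ := fun a => x a.1

noncomputable def condParams {V : Type*} [Fintype V] [DecidableEq V]
    (μ : V → ℝ) (Sg : Matrix V V ℝ) (B S : Finset V) :
    (B → ℝ) × Matrix B S ℝ × Matrix B B ℝ :=
  (rest μ B - (msub Sg B S * (psub Sg S)⁻¹) *ᵥ rest μ S,
   msub Sg B S * (psub Sg S)⁻¹,
   psub Sg B - msub Sg B S * (psub Sg S)⁻¹ * msub Sg S B)

def IsSeedSet {V : Type*} [Fintype V] [DecidableEq V]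
    (μ₁ : V → ℝ) (S₁ : Matrix V V ℝ) (μ₂ : V → ℝ) (S₂ : Matrix V V ℝ)
    (D : Finset V) : Prop :=
  condParams μ₁ S₁ Dᶜ D = condParams μ₂ S₂ Dᶜ D

section Blocks

variable {V : Type*} [Fintype V] [DecidableEq V]

lemma msub_self (M : Matrix V V ℝ) (A : Finset V) : msub M A A = psub M A := rfl

lemma msub_mul (A B : Matrix V V ℝ) (R C D : Finset V) :
    msub (A * B) R C = msub A R D * msub B D C + msub A R Dᶜ * msub B Dᶜ C := by
  ext i j
  simp only [msub, submatrix_apply, mul_apply, Matrix.add_apply]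
  rw [Finset.sum_coe_sort D fun k => A i k * B k j,
    Finset.sum_coe_sort Dᶜ fun k => A i k * B k j]
  exact (Finset.sum_add_sum_compl D _).symm

lemma rest_mulVec (A : Matrix V V ℝ) (x : V → ℝ) (R D : Finset V) :
    rest (A *ᵥ x) R = msub A R D *ᵥ rest x D + msub A R Dᶜ *ᵥ rest x Dᶜ := by
  ext i
  simp only [rest, msub, submatrix_apply, mulVec, dotProduct, Pi.add_apply]
  rw [Finset.sum_coe_sort D fun k => A i k * x k, Finset.sum_coe_sort Dᶜ fun k => A i k * x k]
  exact (Finset.sum_add_sum_compl D _).symm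

lemma psub_one (D : Finset V) : psub (1 : Matrix V V ℝ) D = 1 :=
  submatrix_one _ Subtype.val_injective

lemma msub_one_compl (D : Finset V) : msub (1 : Matrix V V ℝ) Dᶜ D = 0 := by
  ext i j
  exact one_apply_ne fun h : (i : V) = j => Finset.mem_compl.1 i.2 (h ▸ j.2)

lemma Matrix.PosDef.isUnit_det_psub {M : Matrix V V ℝ} (hM : M.PosDef) (D : Finset V) :
    IsUnit (psub M D).det :=
  (isUnit_iff_isUnit_det _).1 (hM.submatrix Subtype.val_injective).isUnit

end Blocks

section Precision

variable {V : Type*} [Fintype V] [DecidableEq V] {Sg : Matrix V V ℝ} {D : Finset V}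

noncomputable def schurCompl (Sg : Matrix V V ℝ) (D : Finset V) : Matrix ↥Dᶜ ↥Dᶜ ℝ :=
  psub Sg Dᶜ - msub Sg Dᶜ D * (psub Sg D)⁻¹ * msub Sg D Dᶜ

lemma msub_inv_compl (hS : IsUnit Sg.det) (hD : IsUnit (psub Sg D).det) :
    msub Sg⁻¹ Dᶜ D = -(psub Sg⁻¹ Dᶜ * (msub Sg Dᶜ D * (psub Sg D)⁻¹)) := by
  have h := msub_mul Sg⁻¹ Sg Dᶜ D D
  rw [nonsing_inv_mul _ hS, msub_one_compl, msub_self, msub_self] at h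
  calc msub Sg⁻¹ Dᶜ D = msub Sg⁻¹ Dᶜ D * psub Sg D * (psub Sg D)⁻¹ :=
        (mul_nonsing_inv_cancel_right _ _ hD).symm
    _ = -(psub Sg⁻¹ Dᶜ * msub Sg Dᶜ D) * (psub Sg D)⁻¹ := by
        rw [eq_neg_of_add_eq_zero_left h.symm]
    _ = _ := by rw [Matrix.neg_mul, Matrix.mul_assoc]

lemma psub_inv_compl_mul_schurCompl (hS : IsUnit Sg.det) (hD : IsUnit (psub Sg D).det) :
    psub Sg⁻¹ Dᶜ * schurCompl Sg D = 1 := by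
  have h := msub_mul Sg⁻¹ Sg Dᶜ Dᶜ D
  rw [nonsing_inv_mul _ hS, msub_self, psub_one, msub_inv_compl hS hD, msub_self,
    msub_self] at h
  rw [h, schurCompl, Matrix.mul_sub, Matrix.neg_mul]
  simp only [Matrix.mul_assoc]
  abel

lemma isUnit_det_psub_inv_compl (hS : IsUnit Sg.det) (hD : IsUnit (psub Sg D).det) :
    IsUnit (psub Sg⁻¹ Dᶜ).det :=
  isUnit_det_of_right_inverse (psub_inv_compl_mul_schurCompl hS hD)

lemma condParams_compl_eq (μ : V → ℝ) (hS : IsUnit Sg.det) (hD : IsUnit (psub Sg D).det) :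
    condParams μ Sg Dᶜ D =
      ((psub Sg⁻¹ Dᶜ)⁻¹ *ᵥ rest (Sg⁻¹ *ᵥ μ) Dᶜ,
       -((psub Sg⁻¹ Dᶜ)⁻¹ * msub Sg⁻¹ Dᶜ D),
       (psub Sg⁻¹ Dᶜ)⁻¹) := by
  have hK := isUnit_det_psub_inv_compl hS hD
  have hcoef : (psub Sg⁻¹ Dᶜ)⁻¹ * msub Sg⁻¹ Dᶜ D = -(msub Sg Dᶜ D * (psub Sg D)⁻¹) := by
    rw [msub_inv_compl hS hD, Matrix.mul_neg, nonsing_inv_mul_cancel_left _ _ hK]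
  have hcov : (psub Sg⁻¹ Dᶜ)⁻¹ = schurCompl Sg D :=
    inv_eq_right_inv (psub_inv_compl_mul_schurCompl hS hD)
  rw [rest_mulVec _ _ _ D, msub_self, mulVec_add, mulVec_mulVec, mulVec_mulVec, hcoef,
    nonsing_inv_mul _ hK, one_mulVec, neg_neg, hcov, neg_mulVec, neg_add_eq_sub]
  rfl

end Precision

section SeedSet

variable {V : Type*} [Fintype V] [DecidableEq V]

lemma blocks_compl_eq_iff (K₁ K₂ : Matrix V V ℝ) (h₁ h₂ : V → ℝ) (D : Finset V) :
    (psub K₁ Dᶜ = psub K₂ Dᶜ ∧ msub K₁ Dᶜ D = msub K₂ Dᶜ D ∧ rest h₁ Dᶜ = rest h₂ Dᶜ) ↔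
      ∀ i ∉ D, K₁ i = K₂ i ∧ h₁ i = h₂ i := by
  constructor
  · rintro ⟨hK, hKD, hh⟩ i hi
    have hi' : i ∈ Dᶜ := Finset.mem_compl.2 hi
    refine ⟨funext fun j => ?_, congrFun hh ⟨i, hi'⟩⟩
    by_cases hj : j ∈ D
    · exact congrFun (congrFun hKD ⟨i, hi'⟩) ⟨j, hj⟩
    · exact congrFun (congrFun hK ⟨i, hi'⟩) ⟨j, Finset.mem_compl.2 hj⟩
  · intro h
    have hrow (i : ↥Dᶜ) := h i (Finset.mem_compl.1 i.2)
    exact ⟨by ext i j; exact congrFun (hrow i).1 j, by ext i j; exact congrFun (hrow i).1 j,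
      funext fun i => (hrow i).2⟩

variable {μ₁ μ₂ : V → ℝ} {S₁ S₂ : Matrix V V ℝ}

lemma isSeedSet_iff (h₁ : S₁.PosDef) (h₂ : S₂.PosDef) (D : Finset V) :
    IsSeedSet μ₁ S₁ μ₂ S₂ D ↔ ∀ i ∉ D, S₁⁻¹ i = S₂⁻¹ i ∧ (S₁⁻¹ *ᵥ μ₁) i = (S₂⁻¹ *ᵥ μ₂) i := by
  have hS₁ := (isUnit_iff_isUnit_det _).1 h₁.isUnit
  have hS₂ := (isUnit_iff_isUnit_det _).1 h₂.isUnit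
  have hK₁ := isUnit_det_psub_inv_compl hS₁ (h₁.isUnit_det_psub D)
  have hK₂ := isUnit_det_psub_inv_compl hS₂ (h₂.isUnit_det_psub D)
  rw [IsSeedSet, condParams_compl_eq μ₁ hS₁ (h₁.isUnit_det_psub D),
    condParams_compl_eq μ₂ hS₂ (h₂.isUnit_det_psub D), ← blocks_compl_eq_iff]
  refine ⟨fun h => ?_, fun ⟨hK, hKD, hh⟩ => by rw [hK, hKD, hh]⟩
  simp only [Prod.mk.injEq, neg_inj] at h
  obtain ⟨hmean, hcoef, hcov⟩ := h
  have hK : psub S₁⁻¹ Dᶜ = psub S₂⁻¹ Dᶜ := inv_inj hcov hK₁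
  refine ⟨hK, ?_, ?_⟩
  · rw [← mul_nonsing_inv_cancel_left _ (msub S₁⁻¹ Dᶜ D) hK₁, hcoef, hK,
      mul_nonsing_inv_cancel_left _ _ hK₂]
  · have hinj := mulVec_injective_iff_isUnit.2
      ((isUnit_iff_isUnit_det _).2 (isUnit_nonsing_inv_det _ hK₁))
    rw [← hinj.eq_iff, hmean, hcov]

end SeedSet

theorem stmt_9_general {V : Type*} [Fintype V] [DecidableEq V]
    (μ₁ μ₂ : V → ℝ) (S₁ S₂ : Matrix V V ℝ)
    (h₁ : S₁.PosDef) (h₂ : S₂.PosDef)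
    (D D' : Finset V) (hseed : IsSeedSet μ₁ S₁ μ₂ S₂ D) (hDD' : D ⊆ D') :
    IsSeedSet μ₁ S₁ μ₂ S₂ D' := by
  rw [isSeedSet_iff h₁ h₂] at hseed ⊢
  exact fun i hi => hseed i (fun hiD => hi (hDD' hiD))

/-- Any superset of a seed set is a seed set. -/
theorem stmt_9 {V : Type*} [Fintype V] [DecidableEq V]
    (μ₁ μ₂ : V → ℝ) (S₁ S₂ : Matrix V V ℝ)
    (h₁sym : S₁.IsSymm) (h₂sym : S₂.IsSymm)
    (h₁ : S₁.PosDef) (h₂ : S₂.PosDef)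
    (D D' : Finset V) (hseed : IsSeedSet μ₁ S₁ μ₂ S₂ D) (hDD' : D ⊆ D') :
    IsSeedSet μ₁ S₁ μ₂ S₂ D' :=
  stmt_9_general μ₁ μ₂ S₁ S₂ h₁ h₂ D D' hseed hDD'
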